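/- arXiv:2006.14954 — 8 statements merged into one kernel-verified Lean document; each statement's English description precedes it below -/
import Mathlib

section
/- Let K be a field, L a field extension of K of finite degree i, V a K-vector space, and G a subgroup of the group of K-linear automorphisms of V. Each g ∈ G acts L-linearly on the base change L ⊗_K V via the map 1 ⊗ g (LinearMap.baseChange). If there exists a finite set S of c vectors of L ⊗_K V such that the only g ∈ G fixing every element of S is the identity, then there exists a finite set T of at most c·i vectors of V such that the only g ∈ G fixing every element of T is the identity. -/
/-!
Fix a `K`-basis `b₁, …, bᵢ` of `L`. Every `s ∈ L ⊗[K] V` can be written as `∑ⱼ bⱼ ⊗ vⱼ`, and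
`1 ⊗ g` acts on such a sum componentwise, so `g` fixes `s` as soon as it fixes its `i` components
`vⱼ`. The components of all elements of `S` form the required set `T`.
-/

open TensorProduct

theorem Module.Basis.exists_finset_card_le_forall_lTensor_eq_self {R M N ι : Type*} [CommRing R]
    [AddCommGroup M] [Module R M] [AddCommGroup N] [Module R N] [Fintype ι]
    (b : Module.Basis ι R M) (x : M ⊗[R] N) :
    ∃ T : Finset N, T.card ≤ Fintype.card ι ∧
      ∀ f : N →ₗ[R] N, (∀ v ∈ T, f v = v) → f.lTensor M x = x := by
  classical
  obtain ⟨c, rfl⟩ := eq_repr_basis_left b x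
  refine ⟨c.support.image c, Finset.card_image_le.trans (Finset.card_le_univ _), ?_⟩
  intro f hf
  rw [map_finsuppSum]
  refine Finsupp.sum_congr fun j hj => ?_
  rw [LinearMap.lTensor_tmul, hf _ (Finset.mem_image_of_mem c hj)]

theorem exists_finset_card_le_forall_baseChange_eq_self {R A V : Type*} [CommRing R]
    [StrongRankCondition R] [Ring A] [Algebra R A] [Module.Free R A] [Module.Finite R A]
    [AddCommGroup V] [Module R V] (S : Finset (A ⊗[R] V)) :
    ∃ T : Finset V, T.card ≤ S.card * Module.finrank R A ∧
      ∀ f : V →ₗ[R] V, (∀ v ∈ T, f v = v) → ∀ s ∈ S, f.baseChange A s = s := by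
  classical
  choose T hcard hfix using
    (Module.finBasis R A).exists_finset_card_le_forall_lTensor_eq_self (N := V)
  refine ⟨S.biUnion T, ?_, fun f hf s hs => ?_⟩
  · calc (S.biUnion T).card ≤ ∑ s ∈ S, (T s).card := Finset.card_biUnion_le
      _ ≤ ∑ _s ∈ S, Module.finrank R A := Finset.sum_le_sum fun s _ => by simpa using hcard s
      _ = S.card * Module.finrank R A := by rw [Finset.sum_const, smul_eq_mul]
  · rw [LinearMap.baseChange_eq_ltensor]
    exact hfix s f fun v hv => hf v (Finset.mem_biUnion.2 ⟨s, hs, hv⟩)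

/-- If `L/K` is a field extension of finite degree `i`, `V` a `K`-vector space and
`G` a subgroup of the `K`-linear automorphisms of `V` acting on `L ⊗[K] V` by base change,
then a base of size `c` for `G` on `L ⊗[K] V` yields a base of size at most `c·i` for `G`
on `V`. -/
theorem stmt2 {K L V : Type*} [Field K] [Field L] [Algebra K L] [FiniteDimensional K L]
    [AddCommGroup V] [Module K V]
    (i : ℕ) (hi : Module.finrank K L = i)
    (G : Subgroup (V ≃ₗ[K] V)) (c : ℕ) (S : Finset (L ⊗[K] V)) (hS : S.card = c)
    (hbase : ∀ g ∈ G, (∀ s ∈ S, LinearMap.baseChange L (g : V →ₗ[K] V) s = s) → g = 1) :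
    ∃ T : Finset V, T.card ≤ c * i ∧
      ∀ g ∈ G, (∀ v ∈ T, g v = v) → g = 1 := by
  obtain ⟨T, hcard, hfix⟩ := exists_finset_card_le_forall_baseChange_eq_self (A := L) S
  refine ⟨T, hS ▸ hi ▸ hcard, fun g hg hgT => hbase g hg (hfix g hgT)⟩
end

section
/- Let K be a field, V a finite-dimensional K-vector space, and f : V → V a bijective K-linear endomorphism that is diagonalizable, i.e., the eigenspaces of f span V. For each μ ∈ K let a_μ denote the dimension of the μ-eigenspace of f. Then for every t ∈ K, the t-eigenspace of the induced endomorphism ⋀²f of the exterior square ⋀²V satisfies 2 · dim (t-eigenspace of ⋀²f) ≤ ∑_μ a_μ² (the sum over the finitely many eigenvalues μ of f). -/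
/-! Write `f` in an eigenbasis `(b i)` with eigenvalues `μ i`, all nonzero because `f` is
injective. The wedges `b i ∧ b j` with `i < j` form an eigenbasis of `⋀²f` with eigenvalues
`μ i * μ j`, so twice the dimension of its `t`-eigenspace is the number of ordered pairs `i ≠ j`
with `μ i * μ j = t`. Grouping the pairs by `μ i = c` bounds this by `∑ c, a c * a (c⁻¹ * t)`,
and since `c ↦ c⁻¹ * t` is injective, summing `2 a b ≤ a² + b²` bounds it by `∑ c, a c ^ 2`. -/

/-- The linear map between `n`-th exterior powers induced functorially by a linear map
`f : M →ₗ[R] N` (the restriction of `ExteriorAlgebra.map f`). -/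
noncomputable def exteriorPower.mapInduced {R M N : Type*} [CommRing R] [AddCommGroup M] [Module R M]
    [AddCommGroup N] [Module R N] (n : ℕ) (f : M →ₗ[R] N) :
    ⋀[R]^n M →ₗ[R] ⋀[R]^n N :=
  have key : ∀ m : ℕ, Submodule.map (ExteriorAlgebra.map f).toLinearMap (⋀[R]^m M) ≤ ⋀[R]^m N := by
    intro m
    rw [Submodule.map_pow, ExteriorAlgebra.ι_range_map_map]
    have h1 : Submodule.map (ExteriorAlgebra.ι R) (LinearMap.range f)
        ≤ LinearMap.range (ExteriorAlgebra.ι R (M := N)) := LinearMap.map_le_range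
    induction m with
    | zero => simp
    | succ m ih =>
        calc Submodule.map (ExteriorAlgebra.ι R) (LinearMap.range f) ^ (m + 1)
            = Submodule.map (ExteriorAlgebra.ι R) (LinearMap.range f) ^ m *
              Submodule.map (ExteriorAlgebra.ι R) (LinearMap.range f) := pow_succ _ m
          _ ≤ LinearMap.range (ExteriorAlgebra.ι R (M := N)) ^ m *
              LinearMap.range (ExteriorAlgebra.ι R (M := N)) := mul_le_mul' ih h1
          _ = ⋀[R]^(m + 1) N := (pow_succ _ m).symm
  (ExteriorAlgebra.map f).toLinearMap.restrict
    fun x hx => key n (Submodule.mem_map_of_mem hx)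

open Module Module.End Finset

theorem exteriorPower.mapInduced_eq_map {R M N : Type*} [CommRing R] [AddCommGroup M]
    [Module R M] [AddCommGroup N] [Module R N] (n : ℕ) (f : M →ₗ[R] N) :
    exteriorPower.mapInduced n f = exteriorPower.map n f := by
  ext m
  simp [exteriorPower.mapInduced, ExteriorAlgebra.map_apply_ιMulti, Function.comp_def]

theorem exteriorPower.map_basis_of_apply_eq_smul {R M I : Type*} [CommRing R] [AddCommGroup M]
    [Module R M] [LinearOrder I] (n : ℕ) (b : Basis I R M) {f : End R M} {μ : I → R}
    (hf : ∀ i, f (b i) = μ i • b i) (s : Set.powersetCard I n) :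
    exteriorPower.map n f (b.exteriorPower n s) = (∏ i ∈ s.val, μ i) • b.exteriorPower n s := by
  rw [exteriorPower.basis_apply, exteriorPower.map_apply_ιMulti_family,
    show f ∘ b = fun i => μ i • b i from funext hf]
  simp only [exteriorPower.ιMulti_family, Function.comp_def]
  rw [AlternatingMap.map_smul_univ, Set.powersetCard.ofFinEmbEquiv_symm_apply]
  congr 1
  conv_rhs => rw [← s.val.map_orderEmbOfFin_univ s.prop, prod_map]
  rfl

theorem Module.End.exists_basis_apply_eq_smul_of_iSup_eigenspace_eq_top {K V : Type*} [Field K]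
    [AddCommGroup V] [Module K V] [FiniteDimensional K V] {f : End K V}
    (h : ⨆ μ, f.eigenspace μ = ⊤) :
    ∃ (n : ℕ) (b : Basis (Fin n) K V) (μ : Fin n → K), ∀ i, f (b i) = μ i • b i := by
  classical
  have hint := DirectSum.isInternal_submodule_of_iSupIndep_of_iSup_eq_top
    f.eigenspaces_iSupIndep h
  let v (μ : K) := finBasis K (f.eigenspace μ)
  let b := hint.collectedBasis v
  have := FiniteDimensional.fintypeBasisIndex b
  let e := Fintype.equivFin (Σ μ : K, Fin (finrank K (f.eigenspace μ)))
  refine ⟨_, b.reindex e, fun i => (e.symm i).1, fun i => ?_⟩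
  rw [Basis.reindex_apply]
  exact mem_eigenspace_iff.1 (hint.collectedBasis_mem v (e.symm i))

theorem Module.End.finrank_eigenspace_eq_card {K W ι : Type*} [Field K] [AddCommGroup W]
    [Module K W] [Fintype ι] [DecidableEq K] (b : Basis ι K W) {g : End K W} {μ : ι → K}
    (hg : ∀ i, g (b i) = μ i • b i) (t : K) :
    finrank K (g.eigenspace t) = #{i | μ i = t} := by
  have hrepr (x : W) (i : ι) : b.repr (g x) i = μ i * b.repr x i := by
    have : b.coord i ∘ₗ g = μ i • b.coord i := b.ext fun j => by
      by_cases hij : j = i <;> simp [hg, hij]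
    exact congr($this x)
  have heig : g.eigenspace t = Submodule.span K (b '' {i | μ i = t}) := by
    apply le_antisymm
    · intro x hx
      rw [b.mem_span_image]
      intro i hi
      have := congr(b.repr $(mem_eigenspace_iff.1 hx) i)
      rw [hrepr, map_smul, Finsupp.smul_apply, smul_eq_mul] at this
      exact mul_right_cancel₀ (Finsupp.mem_support_iff.1 hi) this
    · rw [Submodule.span_le]
      rintro _ ⟨i, hi, rfl⟩
      exact mem_eigenspace_iff.2 (hi ▸ hg i)
  rw [heig, Set.image_eq_range, ← Fintype.card_subtype]
  exact finrank_span_eq_card (b.linearIndependent.comp _ Subtype.val_injective)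

theorem Set.powersetCard.card_filter {I : Type*} [Fintype I] (n : ℕ) (P : Finset I → Prop)
    [DecidablePred P] :
    #{s : Set.powersetCard I n | P s.val} = #{s ∈ Finset.powersetCard n Finset.univ | P s} :=
  card_bij (fun s _ => s.val) (by simp +contextual) (fun _ _ _ _ => Subtype.ext)
    (fun s hs => by
      simp only [mem_filter, Finset.mem_powersetCard] at hs
      exact ⟨⟨s, hs.1.2⟩, by simpa using hs.2, rfl⟩)

theorem Finset.two_mul_card_filter_powersetCard_two {I : Type*} [Fintype I] [DecidableEq I]
    (P : Finset I → Prop) [DecidablePred P] :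
    2 * #{s ∈ univ.powersetCard 2 | P s} = #{p : I × I | p.1 ≠ p.2 ∧ P {p.1, p.2}} := by
  rw [card_eq_sum_card_fiberwise (f := fun p : I × I => ({p.1, p.2} : Finset I))
    (t := {s ∈ univ.powersetCard 2 | P s}) (fun p hp => by
      obtain ⟨hne, hP⟩ := (mem_filter.1 hp).2
      simpa [card_pair hne] using hP), sum_const_nat, mul_comm]
  intro s hs
  simp only [mem_filter, mem_powersetCard, subset_univ, true_and, card_eq_two] at hs
  obtain ⟨⟨x, y, hxy, rfl⟩, hP⟩ := hs
  have hfiber : ({p ∈ {p : I × I | p.1 ≠ p.2 ∧ P {p.1, p.2}} | {p.1, p.2} = ({x, y} : Finset I)}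
      : Finset (I × I)) = {(x, y), (y, x)} := by
    ext ⟨a, b⟩
    simp only [mem_filter, mem_univ, true_and, mem_insert, mem_singleton, Prod.mk.injEq,
      ← coe_inj, coe_pair, Set.pair_eq_pair_iff]
    refine ⟨And.right, fun h => ⟨?_, h⟩⟩
    rcases h with ⟨rfl, rfl⟩ | ⟨rfl, rfl⟩
    · exact ⟨hxy, hP⟩
    · exact ⟨hxy.symm, pair_comm a b ▸ hP⟩
  rw [hfiber, card_pair (by simp [hxy])]

theorem Finset.card_filter_snd_eq_comp_fst {I α : Type*} [Fintype I] [DecidableEq α] (g : I → α)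
    (σ : α → α) {s : Finset α} (hs : ∀ i, g i ∈ s) :
    #{p : I × I | g p.2 = σ (g p.1)} = ∑ c ∈ s, #{i | g i = c} * #{i | g i = σ c} := by
  rw [card_eq_sum_card_fiberwise (f := fun p : I × I => g p.1) (t := s) fun p _ => hs p.1]
  refine sum_congr rfl fun c _ => ?_
  rw [← card_product]
  congr 1
  ext ⟨i, j⟩
  simp only [mem_filter, mem_univ, true_and, mem_product]
  grind

theorem Finset.sum_mul_comp_le_sum_sq {α : Type*} [DecidableEq α] {a : α → ℕ} {σ : α → α}
    (hσ : σ.Injective) {s : Finset α} (ha : ∀ c ∉ s, a c = 0) :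
    ∑ c ∈ s, a c * a (σ c) ≤ ∑ c ∈ s, a c ^ 2 := by
  have hσs : ∑ c ∈ s, a (σ c) ^ 2 ≤ ∑ c ∈ s, a c ^ 2 := by
    rw [← sum_image (f := fun c => a c ^ 2) hσ.injOn]
    exact sum_le_sum_of_ne_zero fun c _ hc => by_contra fun hcs => hc (by simp [ha c hcs])
  have hamgm : ∀ c ∈ s, 2 * (a c * a (σ c)) ≤ a c ^ 2 + a (σ c) ^ 2 := fun c _ => by
    nlinarith [sq_nonneg ((a c : ℤ) - a (σ c))]
  have := sum_le_sum hamgm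
  rw [← mul_sum, sum_add_distrib] at this
  omega

theorem Finset.card_filter_mul_eq_le_sum_sq {I G₀ : Type*} [Fintype I] [GroupWithZero G₀]
    [DecidableEq G₀] {g : I → G₀} (hg : ∀ i, g i ≠ 0) {s : Finset G₀} (hs : ∀ i, g i ∈ s)
    (t : G₀) : #{p : I × I | g p.1 * g p.2 = t} ≤ ∑ c ∈ s, #{i | g i = c} ^ 2 := by
  rcases eq_or_ne t 0 with rfl | ht
  · simp [hg]
  have hσ : Function.Injective fun c : G₀ => c⁻¹ * t :=
    fun c d h => inv_injective (mul_right_cancel₀ ht h)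
  calc #{p : I × I | g p.1 * g p.2 = t}
      = #{p : I × I | g p.2 = (g p.1)⁻¹ * t} := by
        simp_rw [eq_inv_mul_iff_mul_eq₀ (hg _)]
    _ = ∑ c ∈ s, #{i | g i = c} * #{i | g i = c⁻¹ * t} :=
        card_filter_snd_eq_comp_fst g (fun c => c⁻¹ * t) hs
    _ ≤ ∑ c ∈ s, #{i | g i = c} ^ 2 :=
        sum_mul_comp_le_sum_sq hσ fun c hc => card_eq_zero.2 <|
          filter_eq_empty_iff.2 fun i _ hi => hc (hi ▸ hs i)

/-- Let `f` be a bijective diagonalizable endomorphism of a finite-dimensional `K`-vector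
space `V`, with eigenvalues exactly the elements of the finite set `s`, and let `a_μ` be the
dimension of the `μ`-eigenspace of `f`. Then for every `t : K`, the `t`-eigenspace of the
induced endomorphism `⋀²f` of `⋀²V` satisfies `2 · dim ≤ ∑_μ a_μ²`. -/
theorem stmt4 {K V : Type*} [Field K] [AddCommGroup V] [Module K V] [FiniteDimensional K V]
    (f : Module.End K V) (hf : Function.Bijective f)
    (hdiag : (⨆ μ : K, f.eigenspace μ) = ⊤)
    (s : Finset K) (hs : ∀ μ : K, f.HasEigenvalue μ ↔ μ ∈ s) (t : K) :
    2 * Module.finrank K (Module.End.eigenspace (exteriorPower.mapInduced 2 f) t) ≤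
      ∑ μ ∈ s, Module.finrank K (f.eigenspace μ) ^ 2 := by
  classical
  obtain ⟨n, b, μ, hb⟩ := exists_basis_apply_eq_smul_of_iSup_eigenspace_eq_top hdiag
  have hμs (i : Fin n) : μ i ∈ s :=
    (hs _).1 (hasEigenvalue_of_hasEigenvector ⟨mem_eigenspace_iff.2 (hb i), b.ne_zero i⟩)
  have hμ0 (i : Fin n) : μ i ≠ 0 := fun h0 =>
    b.ne_zero i (hf.1 (by rw [hb, h0, zero_smul, map_zero]))
  rw [exteriorPower.mapInduced_eq_map,
    finrank_eigenspace_eq_card _ (exteriorPower.map_basis_of_apply_eq_smul 2 b hb),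
    Set.powersetCard.card_filter 2 (fun S => ∏ i ∈ S, μ i = t),
    two_mul_card_filter_powersetCard_two]
  simp_rw [finrank_eigenspace_eq_card b hb]
  calc #{p : Fin n × Fin n | p.1 ≠ p.2 ∧ ∏ i ∈ {p.1, p.2}, μ i = t}
      ≤ #{p : Fin n × Fin n | μ p.1 * μ p.2 = t} :=
        card_le_card <| monotone_filter_right _ fun p _ ⟨hne, h⟩ => by rwa [prod_pair hne] at h
    _ ≤ ∑ c ∈ s, #{i | μ i = c} ^ 2 := card_filter_mul_eq_le_sum_sq hμ0 hμs t
end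

section
/- Let K be a field, W a K-vector space of finite dimension d₀, and r a prime number. Let σ be the K-linear automorphism of the r-fold tensor power W^{⊗r} determined by cyclically permuting the tensor factors (w_1 ⊗ w_2 ⊗ … ⊗ w_r ↦ w_r ⊗ w_1 ⊗ … ⊗ w_{r−1}). Then the subspace of vectors fixed by σ has dimension (d₀^r + (r−1)·d₀)/r; equivalently, r · dim{x ∈ W^{⊗r} : σ(x) = x} = d₀^r + (r−1)·d₀. -/
open TensorProduct PiTensorProduct

/-!
Take the tensor basis `⊗ᵢ b (f i)`, `f : Fin r → Fin d₀`, of `W^{⊗r}`. The rotation `σ` permutes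
it through the action of the cyclic group `⟨finRotate r⟩` on the index functions `f`, so a vector
is fixed by `σ` iff its coordinates are constant on orbits: the fixed space has one dimension per
orbit. Since the group has prime order `r`, Burnside's lemma counts the orbits: the identity fixes
all `d₀ ^ r` functions, and each of the `r - 1` other elements, which generates the group and so
acts transitively on `Fin r`, fixes only the `d₀` constant functions.
-/

open MulAction

-- `(x • F) a = F (x⁻¹ • a)`: on the basis indices `Fin r → Fin d₀`, `finRotate r` acts as in `hσ`.
attribute [local instance] arrowAction

section Orbits

variable {G ι : Type*} [Group G] [MulAction G ι]

theorem apply_smul_eq_of_zpowers_eq_top {β : Type*} {g : G} (hg : Subgroup.zpowers g = ⊤)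
    {c : ι → β} (h : ∀ i, c (g • i) = c i) (x : G) (i : ι) : c (x • i) = c i := by
  have hg' : g⁻¹ ∈ stabilizer G c := funext fun i => by
    change c (g⁻¹⁻¹ • i) = c i
    rw [inv_inv, h]
  have htop : stabilizer G c = ⊤ :=
    top_le_iff.mp (hg ▸ Subgroup.zpowers_le.mpr (by simpa using Subgroup.inv_mem _ hg'))
  have hxi : c (x⁻¹⁻¹ • i) = c i := congrFun (htop ▸ Subgroup.mem_top x⁻¹ : x⁻¹ ∈ _) i
  rwa [inv_inv] at hxi

theorem forall_apply_smul_eq_iff_mem_range_comp_mk {β : Type*} {g : G} (hg : Subgroup.zpowers g = ⊤)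
    (c : ι → β) :
    (∀ i, c (g • i) = c i) ↔
      c ∈ Set.range fun c' : orbitRel.Quotient G ι → β => c' ∘ Quotient.mk _ := by
  constructor
  · intro h
    refine ⟨Quotient.lift c ?_, rfl⟩
    rintro _ j ⟨x, rfl⟩
    exact apply_smul_eq_of_zpowers_eq_top hg h x j
  · rintro ⟨c', rfl⟩ i
    exact congrArg c' (Quotient.sound (mem_orbit i g))

theorem card_mul_card_orbits_of_prime_card [Finite G] [Finite ι] (hG : (Nat.card G).Prime) :
    Nat.card G * Nat.card (orbitRel.Quotient G ι) =
      Nat.card ι + (Nat.card G - 1) * Nat.card (fixedPoints G ι) := by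
  classical
  have := Fintype.ofFinite G
  have := Fintype.ofFinite ι
  have : Fact (Nat.card G).Prime := ⟨hG⟩
  have hfixedBy : ∀ g : G, g ≠ 1 → fixedBy ι g = fixedPoints G ι := by
    refine fun g hg => Set.Subset.antisymm (fun x hx => ?_) (fun x hx => hx g)
    have hstab : stabilizer G x = ⊤ :=
      (stabilizer G x).eq_bot_or_eq_top_of_prime_card.resolve_left
        fun h => hg (Subgroup.mem_bot.mp (h ▸ hx))
    exact fun h => (hstab ▸ Subgroup.mem_top h : h ∈ stabilizer G x)
  have burnside := sum_card_fixedBy_eq_card_orbits_mul_card_group G ι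
  simp only [← Nat.card_eq_fintype_card] at burnside
  have hsum : ∑ g ∈ ({1}ᶜ : Finset G), Nat.card (fixedBy ι g) =
      ∑ _g ∈ ({1}ᶜ : Finset G), Nat.card (fixedPoints G ι) :=
    Finset.sum_congr rfl fun g hg => by rw [hfixedBy g (by simpa using hg)]
  rw [Fintype.sum_eq_add_sum_compl 1, fixedBy_one_eq_univ, Nat.card_univ, hsum,
    Finset.sum_const, Finset.card_compl, Finset.card_singleton, smul_eq_mul,
    ← Nat.card_eq_fintype_card] at burnside
  rw [burnside, mul_comm]

theorem card_fixedPoints_arrowAction {A B : Type*} [MulAction G A] [IsPretransitive G A]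
    [Nonempty A] : Nat.card (fixedPoints G (A → B)) = Nat.card B := by
  have hconst : fixedPoints G (A → B) = Set.range (Function.const A) := by
    ext F
    refine ⟨fun hF => ?_, ?_⟩
    · obtain ⟨a₀⟩ := ‹Nonempty A›
      refine ⟨F a₀, funext fun a => ?_⟩
      obtain ⟨x, rfl⟩ := exists_smul_eq G a₀ a
      have hx : F (x⁻¹⁻¹ • a₀) = F a₀ := congrFun (hF x⁻¹) a₀
      rw [inv_inv] at hx
      exact hx.symm
    · rintro ⟨b, rfl⟩ x
      rfl
  rw [hconst, Nat.card_range_of_injective Function.const_injective]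

end Orbits

section PermutedBasis

variable {R M ι G : Type*} [Group G] [MulAction G ι]

theorem Module.Basis.repr_smul_of_map_eq_smul [Semiring R] [AddCommMonoid M] [Module R M]
    (e : Module.Basis ι R M) {σ : M →ₗ[R] M} {g : G} (hσ : ∀ i, σ (e i) = e (g • i))
    (v : M) (i : ι) :
    e.repr (σ v) (g • i) = e.repr v i := by
  have : Finsupp.lapply (g • i) ∘ₗ e.repr.toLinearMap ∘ₗ σ =
      Finsupp.lapply i ∘ₗ e.repr.toLinearMap :=
    e.ext fun j => by
      simp [hσ, Finsupp.single_apply_left (MulAction.injective g)]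
  exact LinearMap.congr_fun this v

variable [Ring R] [AddCommGroup M] [Module R M]

theorem Module.Basis.mem_ker_sub_id_iff (e : Module.Basis ι R M) {σ : M →ₗ[R] M} {g : G}
    (hσ : ∀ i, σ (e i) = e (g • i)) (v : M) :
    v ∈ LinearMap.ker (σ - LinearMap.id) ↔ ∀ i, e.repr v (g • i) = e.repr v i := by
  rw [LinearMap.mem_ker, LinearMap.sub_apply, LinearMap.id_apply, sub_eq_zero,
    ← e.repr.injective.eq_iff, Finsupp.ext_iff, ← (MulAction.toPerm g).forall_congr_right]
  simp only [MulAction.toPerm_apply, e.repr_smul_of_map_eq_smul hσ, eq_comm]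

theorem Module.Basis.finrank_ker_sub_id_eq_card_orbits [StrongRankCondition R] [Finite ι]
    (e : Module.Basis ι R M) {σ : M →ₗ[R] M} {g : G} (hg : Subgroup.zpowers g = ⊤)
    (hσ : ∀ i, σ (e i) = e (g • i)) :
    Module.finrank R (LinearMap.ker (σ - LinearMap.id)) = Nat.card (orbitRel.Quotient G ι) := by
  have := Fintype.ofFinite (orbitRel.Quotient G ι)
  let Φ : (orbitRel.Quotient G ι → R) →ₗ[R] M :=
    e.equivFun.symm.toLinearMap ∘ₗ LinearMap.funLeft R R (Quotient.mk _)
  have hΦ : Function.Injective Φ := e.equivFun.symm.injective.comp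
    (LinearMap.funLeft_injective_of_surjective _ _ _ Quotient.mk_surjective)
  have hrange : LinearMap.range Φ = LinearMap.ker (σ - LinearMap.id) := by
    ext v
    rw [e.mem_ker_sub_id_iff hσ, forall_apply_smul_eq_iff_mem_range_comp_mk hg, LinearMap.mem_range]
    simp only [Φ, LinearMap.comp_apply, LinearEquiv.coe_coe, LinearEquiv.symm_apply_eq]
    rfl
  rw [← hrange, LinearMap.finrank_range_of_inj hΦ, Module.finrank_fintype_fun_eq_card,
    Nat.card_eq_fintype_card]

end PermutedBasis

section FinRotate

variable {n : ℕ}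

theorem orderOf_finRotate (hn : 2 ≤ n) : orderOf (finRotate n) = n := by
  rw [(isCycle_finRotate_of_le hn).orderOf, support_finRotate_of_le hn, Finset.card_univ,
    Fintype.card_fin]

theorem isPretransitive_zpowers_finRotate (hn : 2 ≤ n) :
    IsPretransitive (Subgroup.zpowers (finRotate n)) (Fin n) := by
  refine ⟨fun i j => ?_⟩
  have hmem : ∀ k, finRotate n k ≠ k := fun k =>
    Equiv.Perm.mem_support.mp (support_finRotate_of_le hn ▸ Finset.mem_univ k)
  obtain ⟨m, hm⟩ := (isCycle_finRotate_of_le hn).sameCycle (hmem i) (hmem j)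
  exact ⟨⟨_, m, rfl⟩, hm⟩

end FinRotate

theorem Subgroup.zpowers_mk_self_eq_top {G : Type*} [Group G] (a : G) :
    Subgroup.zpowers (⟨a, Subgroup.mem_zpowers a⟩ : Subgroup.zpowers a) = ⊤ := by
  refine eq_top_iff.mpr fun x _ => ?_
  obtain ⟨_, m, rfl⟩ := x
  exact ⟨m, rfl⟩

/-- Let `W` be a `K`-vector space of dimension `d₀` and `r` a prime. If `σ` is the linear
automorphism of the `r`-fold tensor power `W^{⊗r}` that cyclically permutes the tensor
factors (`w_1 ⊗ ⋯ ⊗ w_r ↦ w_r ⊗ w_1 ⊗ ⋯ ⊗ w_{r-1}`), then the subspace of `σ`-fixed vectors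
has dimension `(d₀^r + (r-1)·d₀)/r`; equivalently
`r · dim {x : σ x = x} = d₀^r + (r-1)·d₀`. -/
theorem stmt6 {K W : Type*} [Field K] [AddCommGroup W] [Module K W] [FiniteDimensional K W]
    (d₀ : ℕ) (hd : Module.finrank K W = d₀) (r : ℕ) (hr : r.Prime)
    (σ : (⨂[K] _ : Fin r, W) ≃ₗ[K] (⨂[K] _ : Fin r, W))
    (hσ : ∀ w : Fin r → W,
      σ (tprod K w) = tprod K (fun i => w ((finRotate r).symm i))) :
    r * Module.finrank K (LinearMap.ker (σ.toLinearMap - LinearMap.id)) =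
      d₀ ^ r + (r - 1) * d₀ := by
  have hr2 := hr.two_le
  have := isPretransitive_zpowers_finRotate hr2
  have hcard : Nat.card (Subgroup.zpowers (finRotate r)) = r := by
    rw [Nat.card_zpowers, orderOf_finRotate hr2]
  let g : Subgroup.zpowers (finRotate r) := ⟨finRotate r, Subgroup.mem_zpowers _⟩
  let e := Basis.piTensorProduct fun _ : Fin r => Module.finBasisOfFinrankEq K W hd
  have hσe : ∀ f, σ (e f) = e (g • f) := fun f => by
    rw [Basis.piTensorProduct_apply, Basis.piTensorProduct_apply, hσ]
    rfl
  have : Nonempty (Fin r) := ⟨⟨0, hr.pos⟩⟩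
  have hburnside := card_mul_card_orbits_of_prime_card (ι := Fin r → Fin d₀) (hcard ▸ hr)
  rw [hcard, card_fixedPoints_arrowAction] at hburnside
  rw [e.finrank_ker_sub_id_eq_card_orbits (Subgroup.zpowers_mk_self_eq_top _) hσe, hburnside,
    Nat.card_fun, Nat.card_fin, Nat.card_fin]
end

section
/- Let F be a finite field whose characteristic does not divide n, where n ≥ 3. Then for every n×n matrix A over F with trace 0 there exists g ∈ SL_n(F) such that g is not a scalar matrix and g·A = A·g. (Equivalently, the conjugation action of PSL_n(F) on the space of trace-zero matrices has no regular orbit.) -/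
/-!
If an eigenvalue `μ ∈ F` of `A` has a right eigenvector `v` and a left eigenvector `φ` with
`φ ⬝ᵥ v = 0`, the transvection `1 + v φ` lies in `SL_n(F)`, commutes with `A` and is not scalar.
Otherwise the eigenvectors of each eigenvalue `μ ∈ F` can be normalised to `φ_μ ⬝ᵥ v_μ = 1`, and
the rank-one matrices `P_μ = v_μ φ_μ` are orthogonal idempotents commuting with `A`. If they sum
to `1`, there are at least `n ≥ 3` of them and the matrices `∑ ε_μ P_μ` with `ε_μ ∈ Fˣ` are
`(q - 1) ^ n` distinct commuting units. If their sum `Q` is not `1`, then `A` has no eigenvector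
in `ker Q`, so `c + t A` is invertible on `ker Q` for `(c, t) ≠ 0`, and the matrices
`Q + (c + t A) (1 - Q)` are `q ^ 2 - 1` distinct commuting units. Either way there are more than
`q (q - 1)` commuting units, so some determinant fibre contains more than `q` of them; they cannot
all be proportional to one of them, and the quotient of two non-proportional ones is the required
element of `SL_n(F)`.
-/

namespace Matrix

variable {F : Type*} [Field F] {ι : Type*} [Fintype ι]

theorem dotProduct_eq_zero_of_eigen_ne {A : Matrix ι ι F} {φ v : ι → F} {μ ν : F}
    (hφ : φ ᵥ* A = μ • φ) (hv : A *ᵥ v = ν • v) (hμν : μ ≠ ν) : φ ⬝ᵥ v = 0 := by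
  have h : μ * (φ ⬝ᵥ v) = ν * (φ ⬝ᵥ v) := by
    rw [← smul_eq_mul, ← smul_dotProduct, ← hφ, ← dotProduct_mulVec, hv, dotProduct_smul,
      smul_eq_mul]
  exact (mul_eq_zero.mp (by rw [sub_mul, h, sub_self])).resolve_left (sub_ne_zero.mpr hμν)

variable [DecidableEq ι]

def CommutesWithNonscalarSL (A : Matrix ι ι F) : Prop :=
  ∃ g : SpecialLinearGroup ι F,
    (¬ ∃ c : F, (g : Matrix ι ι F) = c • (1 : Matrix ι ι F)) ∧ (g : Matrix ι ι F) * A = A * g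

theorem exists_vecMul_eq_smul_of_mulVec_eq_smul {A : Matrix ι ι F}
    {v : ι → F} {μ : F} (hv : v ≠ 0) (hAv : A *ᵥ v = μ • v) :
    ∃ φ : ι → F, φ ≠ 0 ∧ φ ᵥ* A = μ • φ := by
  have hdet : (A - μ • 1).det = 0 :=
    exists_mulVec_eq_zero_iff.mp ⟨v, hv, by simp [sub_mulVec, hAv, smul_mulVec]⟩
  obtain ⟨φ, hφ, h⟩ := exists_vecMul_eq_zero_iff.mpr hdet
  exact ⟨φ, hφ, by simpa [vecMul_sub, sub_eq_zero, vecMul_smul] using h⟩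

theorem exists_dual_eigenvector {A : Matrix ι ι F} {v : ι → F} {μ : F}
    (hv : v ≠ 0) (hAv : A *ᵥ v = μ • v)
    (hA : ∀ φ : ι → F, φ ≠ 0 → φ ᵥ* A = μ • φ → φ ⬝ᵥ v ≠ 0) :
    ∃ φ : ι → F, φ ᵥ* A = μ • φ ∧ φ ⬝ᵥ v = 1 := by
  obtain ⟨φ, hφ, hφA⟩ := exists_vecMul_eq_smul_of_mulVec_eq_smul hv hAv
  refine ⟨(φ ⬝ᵥ v)⁻¹ • φ, by rw [smul_vecMul, hφA, smul_comm], ?_⟩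
  rw [smul_dotProduct, smul_eq_mul, inv_mul_cancel₀ (hA φ hφ hφA)]

theorem commutesWithNonscalarSL_of_dotProduct_eq_zero {A : Matrix ι ι F} {v φ : ι → F}
    {μ : F} (hv : v ≠ 0) (hφ : φ ≠ 0) (hAv : A *ᵥ v = μ • v) (hφA : φ ᵥ* A = μ • φ)
    (hφv : φ ⬝ᵥ v = 0) :
    CommutesWithNonscalarSL A := by
  have hdet : (1 + vecMulVec v φ).det = 1 := by
    rw [vecMulVec_eq Unit, det_one_add_replicateCol_mul_replicateRow, hφv, add_zero]
  refine ⟨⟨1 + vecMulVec v φ, hdet⟩, ?_, ?_⟩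
  · rintro ⟨c, hc⟩
    have hcv : v = c • v := by
      simpa [add_mulVec, vecMulVec_mulVec, hφv, smul_mulVec, one_mulVec] using congrArg (· *ᵥ v) hc
    have hc1 : c = 1 := smul_left_injective F hv (by simpa using hcv.symm)
    exact vecMulVec_ne_zero hv hφ (by simpa [hc1] using hc)
  · simp [add_mul, mul_add, mul_vecMulVec, vecMulVec_mul, hAv, hφA, vecMulVec_smul, smul_vecMulVec]

theorem orthogonalIdempotents_vecMulVec {κ : Type*} [DecidableEq κ] {v φ : κ → ι → F}
    (h : ∀ i j, φ i ⬝ᵥ v j = if i = j then 1 else 0) :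
    OrthogonalIdempotents fun i => vecMulVec (v i) (φ i) :=
  OrthogonalIdempotents.iff_mul_eq.mpr fun i j => by
    rw [vecMulVec_mul_vecMulVec, h]
    split_ifs with hij <;> simp [hij]

theorem card_le_of_sum_vecMulVec_eq_one {κ : Type*} [Fintype κ]
    {v φ : κ → ι → F} (h : ∑ i, vecMulVec (v i) (φ i) = 1) :
    Fintype.card ι ≤ Fintype.card κ := by
  have hfac : (of fun a i => v i a) * (of fun i b => φ i b) = 1 := by
    rw [← h]
    ext a b
    simp [mul_apply, vecMulVec_apply, Matrix.sum_apply]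
  calc Fintype.card ι = (1 : Matrix ι ι F).rank := rank_one.symm
    _ ≤ (of fun i b => φ i b).rank := hfac ▸ rank_mul_le_right _ _
    _ ≤ Fintype.card κ := rank_le_card_height _

theorem commutesWithNonscalarSL_of_card_lt [Fintype F] {A : Matrix ι ι F}
    {κ : Type*} [Fintype κ] (f : κ → GL ι F) (hf : Function.Injective f)
    (hfA : ∀ k, Commute (f k : Matrix ι ι F) A)
    (hcard : (Fintype.card F - 1) * Fintype.card F < Fintype.card κ) :
    CommutesWithNonscalarSL A := by
  classical
  obtain ⟨δ, hδ⟩ := Fintype.exists_lt_card_fiber_of_mul_lt_card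
    (fun k => GeneralLinearGroup.det (f k)) (by rwa [Fintype.card_units])
  set T := Finset.univ.filter fun k => GeneralLinearGroup.det (f k) = δ
  obtain ⟨k₀, hk₀⟩ : T.Nonempty := Finset.card_pos.mp (by omega)
  by_contra H
  have hscalar : ∀ k ∈ T, ∃ c : F, (f k : Matrix ι ι F) = c • (f k₀ : Matrix ι ι F) := by
    intro k hk
    have hdet : (↑(f k * (f k₀)⁻¹) : Matrix ι ι F).det = 1 := by
      have h := map_mul_inv GeneralLinearGroup.det (f k) (f k₀)
      rw [(Finset.mem_filter.mp hk).2, (Finset.mem_filter.mp hk₀).2, mul_inv_cancel] at h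
      exact congrArg Units.val h
    by_contra hnc
    refine H ⟨⟨_, hdet⟩, fun ⟨c, hc⟩ => hnc ⟨c, ?_⟩, ((hfA k).mul_left (hfA k₀).units_inv_left).eq⟩
    rw [← smul_one_mul, ← hc]
    simp
  choose! c hc using hscalar
  have hinj : Set.InjOn c T := fun k hk k' hk' h =>
    hf (Units.ext (by rw [hc k hk, hc k' hk', h]))
  have hT := Finset.card_le_card_of_injOn c (fun _ _ => Finset.mem_coe.mpr (Finset.mem_univ _)) hinj
  rw [Finset.card_univ] at hT
  omega

theorem eq_zero_of_smul_one_add_smul_mulVec_eq_zero {A : Matrix ι ι F} {u : ι → F}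
    (hu : ∀ μ : F, A *ᵥ u = μ • u → u = 0) {c t : F} (hct : (c, t) ≠ 0)
    (h : (c • 1 + t • A) *ᵥ u = 0) : u = 0 := by
  rw [add_mulVec, smul_mulVec, smul_mulVec, one_mulVec] at h
  by_cases ht : t = 0
  · have hc : c ≠ 0 := fun hc => hct (by rw [hc, ht]; rfl)
    simpa [ht, hc] using h
  · refine hu (-(c / t)) ?_
    rw [neg_smul, eq_neg_iff_add_eq_zero, ← smul_right_inj ht, smul_add, smul_smul,
      mul_div_cancel₀ c ht, add_comm, h, smul_zero]

theorem add_mul_one_sub_mulVec_of_mulVec_eq_zero {Q : Matrix ι ι F} (M : Matrix ι ι F)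
    {w : ι → F} (hw : Q *ᵥ w = 0) : (Q + M * (1 - Q)) *ᵥ w = M *ᵥ w := by
  simp [add_mulVec, ← mulVec_mulVec, sub_mulVec, hw]

section Pencil

variable {A Q : Matrix ι ι F}

theorem isUnit_add_smul_mul_one_sub
    (hker : ∀ (μ : F) (u : ι → F), A *ᵥ u = μ • u → Q *ᵥ u = 0 → u = 0)
    (hQ : IsIdempotentElem Q) (hAQ : Commute A Q) {c t : F} (hct : (c, t) ≠ 0) :
    IsUnit (Q + (c • 1 + t • A) * (1 - Q)) := by
  have hQg : Q * (Q + (c • 1 + t • A) * (1 - Q)) = Q := by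
    have hcomm : Commute Q (c • 1 + t • A) :=
      ((Commute.one_right Q).smul_right _).add_right (hAQ.symm.smul_right _)
    rw [mul_add, hQ.eq, ← mul_assoc, hcomm.eq, mul_assoc, hQ.mul_one_sub_self, mul_zero,
      add_zero]
  refine mulVec_injective_iff_isUnit.mp
    ((injective_iff_map_eq_zero (mulVecLin _)).mpr fun w hw => ?_)
  rw [mulVecLin_apply] at hw
  have hQw : Q *ᵥ w = 0 := by rw [← hQg, ← mulVec_mulVec, hw, mulVec_zero]
  exact eq_zero_of_smul_one_add_smul_mulVec_eq_zero (fun μ hμ => hker μ w hμ hQw) hct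
    (by rw [← add_mul_one_sub_mulVec_of_mulVec_eq_zero _ hQw, hw])

theorem add_smul_mul_one_sub_injective
    (hker : ∀ (μ : F) (u : ι → F), A *ᵥ u = μ • u → Q *ᵥ u = 0 → u = 0)
    (hQ : IsIdempotentElem Q) (hQ1 : Q ≠ 1) :
    Function.Injective fun p : F × F => Q + (p.1 • 1 + p.2 • A) * (1 - Q) := by
  intro p p' h
  obtain ⟨w, hw⟩ : ∃ w, (1 - Q) *ᵥ w ≠ 0 := by
    by_contra! h0
    exact hQ1 (sub_eq_zero.mp (ext_iff_mulVec.mpr fun w => by simp [h0])).symm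
  have hQu : Q *ᵥ (1 - Q) *ᵥ w = 0 := by rw [mulVec_mulVec, hQ.mul_one_sub_self, zero_mulVec]
  by_contra hpp
  refine hw (eq_zero_of_smul_one_add_smul_mulVec_eq_zero (fun μ hμ => hker μ _ hμ hQu)
    (sub_ne_zero.mpr hpp) ?_)
  have hpp' := congrArg (· *ᵥ (1 - Q) *ᵥ w) h
  simp only [add_mul_one_sub_mulVec_of_mulVec_eq_zero _ hQu] at hpp'
  change ((p.1 - p'.1) • 1 + (p.2 - p'.2) • A) *ᵥ _ = 0
  rw [sub_smul, sub_smul, sub_add_sub_comm, sub_mulVec, hpp', sub_self]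

theorem commutesWithNonscalarSL_of_isIdempotentElem [Fintype F]
    (hker : ∀ (μ : F) (u : ι → F), A *ᵥ u = μ • u → Q *ᵥ u = 0 → u = 0)
    (hQ : IsIdempotentElem Q) (hAQ : Commute A Q) (hQ1 : Q ≠ 1) : CommutesWithNonscalarSL A := by
  classical
  refine commutesWithNonscalarSL_of_card_lt (κ := {p : F × F // p ≠ 0})
    (fun p => (isUnit_add_smul_mul_one_sub hker hQ hAQ p.2).unit)
    (fun p p' h => Subtype.ext (add_smul_mul_one_sub_injective hker hQ hQ1
      (congrArg Units.val h)))
    (fun p => (hAQ.add_right ((((Commute.one_right A).smul_right _).add_right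
      ((Commute.refl A).smul_right _)).mul_right ((Commute.one_right A).sub_right hAQ))).symm) ?_
  have hq : 2 ≤ Fintype.card F := Fintype.one_lt_card
  simp only [Fintype.card_subtype_compl, Fintype.card_prod, Fintype.card_unique]
  zify [(by omega : 1 ≤ Fintype.card F), (by nlinarith : 1 ≤ Fintype.card F * Fintype.card F)]
  nlinarith

end Pencil

theorem commutesWithNonscalarSL_of_completeOrthogonalIdempotents [Fintype F]
    {A : Matrix ι ι F} {κ : Type*} [Fintype κ] {P : κ → Matrix ι ι F}
    (hP : CompleteOrthogonalIdempotents P) (hP0 : ∀ i, P i ≠ 0) (hAP : ∀ i, Commute A (P i))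
    (hκ : 3 ≤ Fintype.card κ) (hq : 3 ≤ Fintype.card F) :
    CommutesWithNonscalarSL A := by
  classical
  have hPsum : ∀ (j : κ) (a : κ → F), P j * ∑ i, a i • P i = a j • P j := by
    intro j a
    simp [Finset.mul_sum, hP.mul_eq]
  have hmul : ∀ a b : κ → F, (∑ i, a i • P i) * (∑ i, b i • P i) = ∑ i, (a i * b i) • P i := by
    intro a b
    simp [Finset.sum_mul, hPsum, smul_smul]
  let f : (κ → Fˣ) → GL ι F := fun ε =>
    ⟨∑ i, (ε i : F) • P i, ∑ i, ((ε i)⁻¹ : F) • P i, by simp [hmul, hP.complete],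
      by simp [hmul, hP.complete]⟩
  have hf : Function.Injective f := by
    intro ε ε' h
    funext j
    have hj := congrArg (P j * ·) (congrArg Units.val h)
    simp only [f, hPsum] at hj
    exact Units.ext (smul_left_injective F (hP0 j) hj)
  refine commutesWithNonscalarSL_of_card_lt f hf
    (fun ε => (Commute.sum_right _ _ _ fun i _ => (hAP i).smul_right _).symm) ?_
  rw [Fintype.card_fun, Fintype.card_units]
  have hq' : Fintype.card F < (Fintype.card F - 1) ^ 2 := by
    zify [(by omega : 1 ≤ Fintype.card F)]
    nlinarith
  calc (Fintype.card F - 1) * Fintype.card F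
      < (Fintype.card F - 1) * (Fintype.card F - 1) ^ 2 :=
        Nat.mul_lt_mul_of_pos_left hq' (by omega)
    _ = (Fintype.card F - 1) ^ 3 := by ring
    _ ≤ (Fintype.card F - 1) ^ Fintype.card κ := Nat.pow_le_pow_right (by omega) hκ

theorem commutesWithNonscalarSL_of_dotProduct_ne_zero [Fintype F]
    {A : Matrix ι ι F} (hι : 3 ≤ Fintype.card ι)
    (hA : ∀ (μ : F) (v φ : ι → F), v ≠ 0 → φ ≠ 0 → A *ᵥ v = μ • v → φ ᵥ* A = μ • φ →
      φ ⬝ᵥ v ≠ 0) :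
    CommutesWithNonscalarSL A := by
  classical
  let κ := {μ : F // ∃ v : ι → F, v ≠ 0 ∧ A *ᵥ v = μ • v}
  choose v hv0 hAv using fun μ : κ => μ.2
  choose φ hφA hφv using fun μ : κ => exists_dual_eigenvector (hv0 μ) (hAv μ)
    fun ψ hψ hψA => hA μ _ ψ (hv0 μ) hψ (hAv μ) hψA
  have hφ0 : ∀ μ, φ μ ≠ 0 := fun μ h => by simpa [h] using hφv μ
  have hdual : ∀ μ ν, φ μ ⬝ᵥ v ν = if μ = ν then 1 else 0 := by
    intro μ ν
    split_ifs with h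
    · exact h ▸ hφv μ
    · exact dotProduct_eq_zero_of_eigen_ne (hφA μ) (hAv ν) (Subtype.val_injective.ne h)
  set P := fun μ => vecMulVec (v μ) (φ μ)
  have hP : OrthogonalIdempotents P := orthogonalIdempotents_vecMulVec hdual
  have hAP : ∀ μ, Commute A (P μ) := fun μ => by
    simp only [Commute, SemiconjBy, P, mul_vecMulVec, vecMulVec_mul, hAv, hφA, smul_vecMulVec,
      vecMulVec_smul]
  by_cases hQ : ∑ μ, P μ = 1
  · have hκ := hι.trans (card_le_of_sum_vecMulVec_eq_one hQ)
    exact commutesWithNonscalarSL_of_completeOrthogonalIdempotents ⟨hP, hQ⟩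
      (fun μ => vecMulVec_ne_zero (hv0 μ) (hφ0 μ)) hAP hκ (hκ.trans (Fintype.card_subtype_le _))
  · have hker : ∀ (μ : F) (u : ι → F), A *ᵥ u = μ • u → (∑ ν, P ν) *ᵥ u = 0 → u = 0 := by
      intro μ u hAu hQu
      by_contra hu
      let μ' : κ := ⟨μ, u, hu, hAu⟩
      refine hA μ u (φ μ') hu (hφ0 μ') hAu (hφA μ') ?_
      have h := congrArg (P μ' *ᵥ ·) hQu
      simp only [mulVec_mulVec, hP.mul_sum_of_mem (Finset.mem_univ μ'), mulVec_zero, P,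
        vecMulVec_mulVec] at h
      simpa [hv0 μ'] using h
    exact commutesWithNonscalarSL_of_isIdempotentElem hker hP.isIdempotentElem_sum
      (Commute.sum_right _ _ _ fun μ _ => hAP μ) hQ

theorem commutesWithNonscalarSL_of_three_le_card [Fintype F]
    (hι : 3 ≤ Fintype.card ι) (A : Matrix ι ι F) : CommutesWithNonscalarSL A := by
  by_cases h : ∃ (μ : F) (v φ : ι → F), v ≠ 0 ∧ φ ≠ 0 ∧ A *ᵥ v = μ • v ∧ φ ᵥ* A = μ • φ ∧
      φ ⬝ᵥ v = 0
  · obtain ⟨μ, v, φ, hv, hφ, hAv, hφA, hφv⟩ := h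
    exact commutesWithNonscalarSL_of_dotProduct_eq_zero hv hφ hAv hφA hφv
  · push Not at h
    exact commutesWithNonscalarSL_of_dotProduct_ne_zero hι h

end Matrix

theorem stmt7_general {F : Type*} [Field F] [Fintype F] (n : ℕ) (hn : 3 ≤ n)
    (A : Matrix (Fin n) (Fin n) F) :
    ∃ g : Matrix.SpecialLinearGroup (Fin n) F,
      (¬ ∃ c : F, (g : Matrix (Fin n) (Fin n) F) = c • (1 : Matrix (Fin n) (Fin n) F)) ∧
      (g : Matrix (Fin n) (Fin n) F) * A = A * (g : Matrix (Fin n) (Fin n) F) :=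
  Matrix.commutesWithNonscalarSL_of_three_le_card (by simpa using hn) A

/-- If `F` is a finite field whose characteristic does not divide `n ≥ 3`, then every
trace-zero `n×n` matrix `A` over `F` commutes with some non-scalar element of `SL_n(F)`;
equivalently, the conjugation action of `PSL_n(F)` on trace-zero matrices has no regular
orbit. -/
theorem stmt7 {F : Type*} [Field F] [Fintype F] (n : ℕ) (hn : 3 ≤ n)
    (hchar : ¬ (ringChar F ∣ n))
    (A : Matrix (Fin n) (Fin n) F) (hA : A.trace = 0) :
    ∃ g : Matrix.SpecialLinearGroup (Fin n) F,
      (¬ ∃ c : F, (g : Matrix (Fin n) (Fin n) F) = c • (1 : Matrix (Fin n) (Fin n) F)) ∧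
      (g : Matrix (Fin n) (Fin n) F) * A = A * (g : Matrix (Fin n) (Fin n) F) :=
  stmt7_general n hn A
end

section
/- Let F be a finite field whose characteristic does not divide n, where n ≥ 3. Then there exist n×n matrices A and B over F with trace A = trace B = 0 such that every g ∈ GL_n(F) commuting with both A and B is a scalar matrix. (That is, the conjugation action of PGL_n(F) on the space of trace-zero matrices admits a base of size 2.) -/
/-!
Take `A` to be the nilpotent shift `N` (ones on the superdiagonal) and `B = E₀₀ - n⁻¹ • 1`,
which has trace zero because `n` is invertible in `F`. A matrix `M` commuting with `B` commutes
with `E₀₀`, and then with `E₀₀ * N ^ j = E₀ⱼ` for every `j`. Commuting with `E₀ⱼ` forces row `j`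
of `M` to vanish off the diagonal and `M j j = M 0 0`, so `M` is scalar.
-/

namespace Matrix

variable {R : Type*} [Semiring R] {n : ℕ}

def upperShift (n : ℕ) : Matrix (Fin n) (Fin n) R :=
  of fun i j => if (j : ℕ) = i + 1 then 1 else 0

theorem trace_upperShift : trace (upperShift n : Matrix (Fin n) (Fin n) R) = 0 := by
  simp [trace, upperShift]

theorem single_mul_upperShift {i j k : Fin n} (hk : (k : ℕ) = j + 1) (c : R) :
    single i j c * upperShift n = single i k c := by
  ext a b
  by_cases ha : a = i
  · subst ha
    rw [single_mul_apply_same]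
    by_cases hb : b = k
    · subst hb
      simp [upperShift, hk]
    · have hb' : (b : ℕ) ≠ j + 1 := fun h => hb (Fin.ext (h.trans hk.symm))
      simp [upperShift, hb', Ne.symm hb]
  · simp [ha, Ne.symm ha]

theorem commute_single_zero_of_commute_upperShift [NeZero n] {M : Matrix (Fin n) (Fin n) R}
    (h₀ : Commute (single 0 0 1) M) (hN : Commute (upperShift n) M) (j : Fin n) :
    Commute (single 0 j 1) M := by
  obtain ⟨j, hj⟩ := j
  induction j with
  | zero => exact h₀
  | succ j ih =>
    rw [← single_mul_upperShift (j := ⟨j, by omega⟩) rfl]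
    exact (ih (by omega)).mul_left hN

theorem mem_range_scalar_of_commute_single_zero_of_commute_upperShift [NeZero n]
    {M : Matrix (Fin n) (Fin n) R} (h₀ : Commute (single 0 0 1) M)
    (hN : Commute (upperShift n) M) : M ∈ Set.range (scalar (Fin n)) := by
  have hM := commute_single_zero_of_commute_upperShift h₀ hN
  refine ⟨M 0 0, ext fun j k => ?_⟩
  obtain rfl | hjk := eq_or_ne j k
  · simp [diag_eq_of_commute_single (hM j)]
  · simp [hjk, row_eq_zero_of_commute_single (hM j) hjk.symm]

end Matrix

open Matrix

theorem stmt9_general {F : Type*} [Field F] (n : ℕ)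
    (hchar : ¬ (ringChar F ∣ n)) :
    ∃ A B : Matrix (Fin n) (Fin n) F, A.trace = 0 ∧ B.trace = 0 ∧
      ∀ g : Matrix.GeneralLinearGroup (Fin n) F,
        (g : Matrix (Fin n) (Fin n) F) * A = A * (g : Matrix (Fin n) (Fin n) F) →
        (g : Matrix (Fin n) (Fin n) F) * B = B * (g : Matrix (Fin n) (Fin n) F) →
        ∃ c : F, (g : Matrix (Fin n) (Fin n) F) = c • (1 : Matrix (Fin n) (Fin n) F) := by
  have hn : (n : F) ≠ 0 := fun h => hchar ((CharP.cast_eq_zero_iff F (ringChar F) n).1 h)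
  have : NeZero n := ⟨by rintro rfl; exact hn Nat.cast_zero⟩
  refine ⟨upperShift n, single 0 0 1 - (n : F)⁻¹ • 1, trace_upperShift, ?_, fun g hA hB => ?_⟩
  · simp [trace_sub, trace_smul, inv_mul_cancel₀ hn]
  have h₀ : Commute (single 0 0 1) (g : Matrix (Fin n) (Fin n) F) := by
    simpa using (show Commute _ _ from hB).symm.add_left ((Commute.one_left _).smul_left (n : F)⁻¹)
  obtain ⟨c, hc⟩ :=
    mem_range_scalar_of_commute_single_zero_of_commute_upperShift h₀ (show Commute _ _ from hA).symm
  exact ⟨c, by rw [← hc, scalar_apply, smul_one_eq_diagonal]⟩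

/-- If `F` is a finite field whose characteristic does not divide `n ≥ 3`, then there are
trace-zero `n×n` matrices `A` and `B` over `F` such that any `g ∈ GL_n(F)` commuting with
both `A` and `B` is scalar; i.e. the conjugation action of `PGL_n(F)` on trace-zero matrices
admits a base of size 2. -/
theorem stmt9 {F : Type*} [Field F] [Fintype F] (n : ℕ) (hn : 3 ≤ n)
    (hchar : ¬ (ringChar F ∣ n)) :
    ∃ A B : Matrix (Fin n) (Fin n) F, A.trace = 0 ∧ B.trace = 0 ∧
      ∀ g : Matrix.GeneralLinearGroup (Fin n) F,
        (g : Matrix (Fin n) (Fin n) F) * A = A * (g : Matrix (Fin n) (Fin n) F) →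
        (g : Matrix (Fin n) (Fin n) F) * B = B * (g : Matrix (Fin n) (Fin n) F) →
        ∃ c : F, (g : Matrix (Fin n) (Fin n) F) = c • (1 : Matrix (Fin n) (Fin n) F) :=
  stmt9_general n hchar
end

section
/- Let q = 2^e with e ≥ 2 and let a be an integer with 1 ≤ a < e and gcd(a,e) = 1. Let A ∈ M_2(F_q) be the matrix with (1,1)-entry 1 and all other entries 0. Then the only g ∈ SL_2(F_q) satisfying g^{-1} · A · g^{(2^a)} = A is the identity matrix, where g^{(2^a)} is obtained from g by applying x ↦ x^{2^a} to each entry. (Hence A is a representative of a regular orbit of SL_2(q) on M_2(F_q) under the twisted conjugation action.) -/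
/-!
Multiplying by `g` turns the equation into `E₀₀ · g^σ = g · E₀₀` with `σ = x ↦ x^(2^a)`;
comparing entries shows that `g` is diagonal with `σ`-fixed `(0,0)`-entry `α`. Since `α` is also
fixed by `x ↦ x^(2^e)`, it is fixed by `x ↦ x^(2^gcd(a,e)) = x ↦ x²` (periodic points of the
Frobenius map), so `α ∈ {0, 1}`; `det g = 1` forces `α = 1` and then `g = 1`.
-/

theorem FiniteField.charP_of_card_eq_prime_pow {F : Type*} [Field F] [Fintype F] {p e : ℕ}
    (hp : p.Prime) (hcard : Fintype.card F = p ^ e) : CharP F p := by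
  obtain ⟨n, hq, hn⟩ := FiniteField.card F (ringChar F)
  have hdvd : ringChar F ∣ p ^ e := hcard ▸ hn ▸ dvd_pow_self _ n.ne_zero
  exact ringChar.of_eq ((Nat.prime_dvd_prime_iff_eq hq hp).mp (hq.dvd_of_dvd_pow hdvd))

theorem pow_pow_gcd_eq_self {R : Type*} [CommSemiring R] (p : ℕ) [ExpChar R p] {x : R}
    {m n : ℕ} (hm : x ^ p ^ m = x) (hn : x ^ p ^ n = x) : x ^ p ^ m.gcd n = x := by
  have periodic_iff (k : ℕ) : Function.IsPeriodicPt (frobenius R p) k x ↔ x ^ p ^ k = x := by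
    rw [Function.IsPeriodicPt, Function.IsFixedPt, iterate_frobenius]
  exact (periodic_iff _).1 (((periodic_iff m).2 hm).gcd ((periodic_iff n).2 hn))

theorem FiniteField.eq_zero_or_one_of_pow_two_pow_eq_self {F : Type*} [Field F] [Fintype F]
    {e a : ℕ} (hcard : Fintype.card F = 2 ^ e) (hgcd : a.gcd e = 1) {x : F}
    (hx : x ^ 2 ^ a = x) : x = 0 ∨ x = 1 := by
  have := charP_of_card_eq_prime_pow Nat.prime_two hcard
  have hxe : x ^ 2 ^ e = x := hcard ▸ FiniteField.pow_card x
  have hsq : x * x = x := by simpa [hgcd, sq] using pow_pow_gcd_eq_self 2 hx hxe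
  exact IsIdempotentElem.iff_eq_zero_or_one.mp hsq

open Matrix in
theorem Matrix.SpecialLinearGroup.eq_one_of_inv_mul_single_mul_map_eq {K : Type*} [Field K]
    (f : K →+* K) (hfix : ∀ x, f x = x → x = 0 ∨ x = 1) (g : SpecialLinearGroup (Fin 2) K)
    (hg : ((g⁻¹ : SpecialLinearGroup (Fin 2) K) : Matrix (Fin 2) (Fin 2) K) * single 0 0 1 *
      (g : Matrix (Fin 2) (Fin 2) K).map f = single 0 0 1) : g = 1 := by
  have hcomm : single 0 0 1 * (g : Matrix (Fin 2) (Fin 2) K).map f =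
      (g : Matrix (Fin 2) (Fin 2) K) * single 0 0 1 := by
    simpa [← Matrix.mul_assoc, ← coe_mul, -coe_inv] using
      congrArg ((g : Matrix (Fin 2) (Fin 2) K) * ·) hg
  have entry (i j : Fin 2) := congrFun (congrFun hcomm i) j
  simp only [Matrix.mul_apply, Fin.sum_univ_two, single_apply, map_apply] at entry
  have h00 : f (g 0 0) = g 0 0 := by simpa using entry 0 0
  have h01 : g 0 1 = 0 := f.injective (by simpa using entry 0 1)
  have h10 : g 1 0 = 0 := by simpa using (entry 1 0).symm
  have hdet : g 0 0 * g 1 1 = 1 := by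
    simpa only [det_fin_two, h01, h10, mul_zero, sub_zero] using det_coe g
  have h00_one : g 0 0 = 1 := (hfix _ h00).resolve_left (left_ne_zero_of_mul_eq_one hdet)
  have h11_one : g 1 1 = 1 := by simpa [h00_one] using hdet
  ext i j
  fin_cases i <;> fin_cases j <;> simp [h00_one, h01, h10, h11_one]

theorem stmt12_general {F : Type*} [Field F] [Fintype F] (e a : ℕ)
    (hcard : Fintype.card F = 2 ^ e) (hgcd : Nat.gcd a e = 1)
    (g : Matrix.SpecialLinearGroup (Fin 2) F)
    (hg : ((g⁻¹ : Matrix.SpecialLinearGroup (Fin 2) F) : Matrix (Fin 2) (Fin 2) F) *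
        Matrix.single 0 0 (1 : F) *
        ((g : Matrix (Fin 2) (Fin 2) F).map (fun x => x ^ 2 ^ a)) =
        Matrix.single 0 0 (1 : F)) :
    g = 1 := by
  have := FiniteField.charP_of_card_eq_prime_pow Nat.prime_two hcard
  exact Matrix.SpecialLinearGroup.eq_one_of_inv_mul_single_mul_map_eq (iterateFrobenius F 2 a)
    (fun _ => FiniteField.eq_zero_or_one_of_pow_two_pow_eq_self hcard hgcd) g hg

/-- Let `F` be the field with `q = 2^e` elements (`e ≥ 2`), and `1 ≤ a < e` with
`gcd(a,e) = 1`. Let `A` be the `2×2` matrix with `(1,1)`-entry `1` and all other entries `0`.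
Then the only `g ∈ SL_2(F)` with `g⁻¹ · A · g^{(2^a)} = A` is the identity, so `A`
represents a regular orbit of `SL_2(q)` on `M_2(F)` under the twisted conjugation action. -/
theorem stmt12 {F : Type*} [Field F] [Fintype F] (e a : ℕ) (he : 2 ≤ e)
    (hcard : Fintype.card F = 2 ^ e) (ha1 : 1 ≤ a) (hae : a < e) (hgcd : Nat.gcd a e = 1)
    (g : Matrix.SpecialLinearGroup (Fin 2) F)
    (hg : ((g⁻¹ : Matrix.SpecialLinearGroup (Fin 2) F) : Matrix (Fin 2) (Fin 2) F) *
        Matrix.single 0 0 (1 : F) *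
        ((g : Matrix (Fin 2) (Fin 2) F).map (fun x => x ^ 2 ^ a)) =
        Matrix.single 0 0 (1 : F)) :
    g = 1 :=
  stmt12_general e a hcard hgcd g hg
end

section
/- Let p be a prime, q = p^e with e ≥ 2, let a be an integer with 1 ≤ a < e, and let n ≥ 2. Consider the action of SL_n(F_q) on M_n(F_q) given by g : A ↦ g^{-1} · A · g^{(p^a)}, where g^{(p^a)} is obtained from g by applying x ↦ x^{p^a} to each entry. Then there exist A, B ∈ M_n(F_q) forming a base of size 2 modulo the kernel of the action: every g ∈ SL_n(F_q) with g^{-1} · A · g^{(p^a)} = A and g^{-1} · B · g^{(p^a)} = B satisfies g^{-1} · C · g^{(p^a)} = C for all C ∈ M_n(F_q). -/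
set_option maxHeartbeats 1000000 in
/-- Let `F` be the field with `q = p^e` elements (`e ≥ 2`), `1 ≤ a < e` and `n ≥ 2`. Then the
action of `SL_n(F)` on `M_n(F)` by `A ↦ g⁻¹ · A · g^{(p^a)}` admits a base of size 2 modulo
the kernel of the action: there are `A, B` such that any `g` fixing both acts as the identity
on all of `M_n(F)`. -/
theorem stmt13 {F : Type*} [Field F] [Fintype F] (p e a n : ℕ) (hp : p.Prime)
    (he : 2 ≤ e) (hcard : Fintype.card F = p ^ e) (ha1 : 1 ≤ a) (hae : a < e)
    (hn : 2 ≤ n) :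
    ∃ A B : Matrix (Fin n) (Fin n) F,
      ∀ g : Matrix.SpecialLinearGroup (Fin n) F,
        ((g⁻¹ : Matrix.SpecialLinearGroup (Fin n) F) : Matrix (Fin n) (Fin n) F) * A *
          ((g : Matrix (Fin n) (Fin n) F).map (fun x => x ^ p ^ a)) = A →
        ((g⁻¹ : Matrix.SpecialLinearGroup (Fin n) F) : Matrix (Fin n) (Fin n) F) * B *
          ((g : Matrix (Fin n) (Fin n) F).map (fun x => x ^ p ^ a)) = B →
        ∀ C : Matrix (Fin n) (Fin n) F,
          ((g⁻¹ : Matrix.SpecialLinearGroup (Fin n) F) : Matrix (Fin n) (Fin n) F) * C *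
            ((g : Matrix (Fin n) (Fin n) F).map (fun x => x ^ p ^ a)) = C := by
  have hp2 := hp.two_le
  -- characteristic
  have hpF : (p : F) = 0 := by
    have h0 : ((p : F)) ^ e = 0 := by
      have := FiniteField.cast_card_eq_zero F
      rw [hcard] at this
      push_cast at this
      exact this
    exact pow_eq_zero_iff (by omega) |>.mp h0
  haveI hchar : CharP F p := by
    haveI := ringChar.charP F
    have hdvd : ringChar F ∣ p := ringChar.dvd hpF
    have hne1 : ringChar F ≠ 1 := CharP.char_ne_one F (ringChar F)
    have heq : ringChar F = p := by
      rcases (Nat.Prime.eq_one_or_self_of_dvd hp _ hdvd) with h | h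
      · exact absurd h hne1
      · exact h
    rw [← heq]; exact ringChar.charP F
  haveI : ExpChar F p := ExpChar.prime hp
  obtain ⟨φ, hφ⟩ : ∃ φ : F →+* F, ∀ x : F, φ x = x ^ p ^ a :=
    ⟨iterateFrobenius F p a, fun x => iterateFrobenius_def p a x⟩
  -- θ not fixed by φ
  obtain ⟨u, hu⟩ := IsCyclic.exists_generator (α := Fˣ)
  have horder : orderOf u = p ^ e - 1 := by
    haveI := Classical.decEq F
    rw [orderOf_eq_card_of_forall_mem_zpowers hu, Nat.card_eq_fintype_card,
      Fintype.card_units, hcard]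
  obtain ⟨θ, hθdef⟩ : ∃ θ : F, θ = (u : F) := ⟨(u : F), rfl⟩
  have hθ : φ θ ≠ θ := by
    intro h
    rw [hφ, hθdef] at h
    have hupow : u ^ (p ^ a) = u := Units.ext (by push_cast; exact h)
    have h1 : u ^ (p ^ a - 1) * u = 1 * u := by
      rw [← pow_succ, show p ^ a - 1 + 1 = p ^ a from by
        have : 1 ≤ p ^ a := Nat.one_le_pow _ _ (by omega); omega, hupow, one_mul]
    have hu1 : u ^ (p ^ a - 1) = 1 := mul_right_cancel h1
    have hdvd := orderOf_dvd_of_pow_eq_one hu1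
    rw [horder] at hdvd
    have hlt : p ^ a < p ^ e := Nat.pow_lt_pow_right (by omega) hae
    have hpa2 : 2 ≤ p ^ a := by
      calc 2 ≤ p := hp2
        _ = p ^ 1 := (pow_one p).symm
        _ ≤ p ^ a := Nat.pow_le_pow_right (by omega) ha1
    have := Nat.le_of_dvd (by omega) hdvd
    omega
  -- the matrices
  obtain ⟨z, hz⟩ : ∃ z : Fin n, (z : ℕ) = 0 := ⟨⟨0, by omega⟩, rfl⟩
  obtain ⟨m, hm⟩ : ∃ m : Fin n, (m : ℕ) = n - 1 := ⟨⟨n - 1, by omega⟩, rfl⟩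
  obtain ⟨N, hNdef⟩ : ∃ N : Matrix (Fin n) (Fin n) F,
      ∀ i j : Fin n, N i j = if (i : ℕ) + 1 = (j : ℕ) then 1 else 0 :=
    ⟨Matrix.of (fun i j => if (i : ℕ) + 1 = (j : ℕ) then 1 else 0), fun _ _ => rfl⟩
  obtain ⟨E, hEdef⟩ : ∃ E : Matrix (Fin n) (Fin n) F,
      ∀ i j : Fin n, E i j = if (i : ℕ) = n - 1 ∧ (j : ℕ) = 0 then 1 else 0 :=
    ⟨Matrix.of (fun i j => if (i : ℕ) = n - 1 ∧ (j : ℕ) = 0 then 1 else 0), fun _ _ => rfl⟩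
  refine ⟨1, N + θ • E, ?_⟩
  intro g hA hB C
  have gcongr : ∀ (i i' j j' : Fin n), (i : ℕ) = (i' : ℕ) → (j : ℕ) = (j' : ℕ) →
      (g : Matrix (Fin n) (Fin n) F) i j = (g : Matrix (Fin n) (Fin n) F) i' j' := by
    intro i i' j j' h1 h2
    rw [show i = i' from Fin.ext h1, show j = j' from Fin.ext h2]
  have hgg : ((g⁻¹ : Matrix.SpecialLinearGroup (Fin n) F) : Matrix (Fin n) (Fin n) F) * g = 1 := by
    rw [← Matrix.SpecialLinearGroup.coe_mul, inv_mul_cancel]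
    rfl
  have hgg' : (g : Matrix (Fin n) (Fin n) F) * (g⁻¹ : Matrix.SpecialLinearGroup (Fin n) F) = 1 := by
    rw [← Matrix.SpecialLinearGroup.coe_mul, mul_inv_cancel]
    rfl
  -- from hA : map = g
  have hmap : (g : Matrix (Fin n) (Fin n) F).map (fun x => x ^ p ^ a) = g := by
    rw [mul_one] at hA
    calc (g : Matrix (Fin n) (Fin n) F).map (fun x => x ^ p ^ a)
        = ((g : Matrix (Fin n) (Fin n) F) * (g⁻¹ : Matrix.SpecialLinearGroup (Fin n) F)) *
          (g : Matrix (Fin n) (Fin n) F).map (fun x => x ^ p ^ a) := by rw [hgg', one_mul]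
      _ = (g : Matrix (Fin n) (Fin n) F) * (((g⁻¹ : Matrix.SpecialLinearGroup (Fin n) F) : Matrix (Fin n) (Fin n) F) *
          (g : Matrix (Fin n) (Fin n) F).map (fun x => x ^ p ^ a)) := Matrix.mul_assoc _ _ _
      _ = (g : Matrix (Fin n) (Fin n) F) * 1 := by rw [hA]
      _ = g := by rw [mul_one]
  have hfix : ∀ i j, φ ((g : Matrix (Fin n) (Fin n) F) i j) = (g : Matrix (Fin n) (Fin n) F) i j := by
    intro i j
    rw [hφ]
    have := congrFun (congrFun hmap i) j
    simpa [Matrix.map_apply] using this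
  -- g commutes with B
  have hcomm : (g : Matrix (Fin n) (Fin n) F) * (N + θ • E) = (N + θ • E) * g := by
    rw [hmap] at hB
    calc (g : Matrix (Fin n) (Fin n) F) * (N + θ • E)
        = (g : Matrix (Fin n) (Fin n) F) * (((g⁻¹ : Matrix.SpecialLinearGroup (Fin n) F) : Matrix (Fin n) (Fin n) F) * (N + θ • E) * g) := by rw [hB]
      _ = ((g : Matrix (Fin n) (Fin n) F) * (g⁻¹ : Matrix.SpecialLinearGroup (Fin n) F)) * ((N + θ • E) * g) := by
          simp only [Matrix.mul_assoc]
      _ = (N + θ • E) * g := by rw [hgg', one_mul]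
  -- fixedness of commutator entries
  have hφfixed : ∀ (M : Matrix (Fin n) (Fin n) F), (∀ i j, φ (M i j) = M i j) →
      ∀ i j, φ (((g : Matrix (Fin n) (Fin n) F) * M - M * g) i j)
        = ((g : Matrix (Fin n) (Fin n) F) * M - M * g) i j := by
    intro M hM i j
    simp only [Matrix.sub_apply, Matrix.mul_apply, map_sub, map_sum, map_mul, hfix, hM]
  have hMN : ∀ i j, φ (N i j) = N i j := by
    intro i j
    rw [hNdef]
    simp only [apply_ite φ, map_one, map_zero]
  have hME : ∀ i j, φ (E i j) = E i j := by
    intro i j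
    rw [hEdef]
    simp only [apply_ite φ, map_one, map_zero]
  have hsplit : (g : Matrix (Fin n) (Fin n) F) * N = N * g ∧
      (g : Matrix (Fin n) (Fin n) F) * E = E * g := by
    have key : ∀ i j, ((g : Matrix (Fin n) (Fin n) F) * N - N * g) i j = 0 ∧
        ((g : Matrix (Fin n) (Fin n) F) * E - E * g) i j = 0 := by
      intro i j
      have hlin : ((g : Matrix (Fin n) (Fin n) F) * N - N * g) i j
          + θ * (((g : Matrix (Fin n) (Fin n) F) * E - E * g) i j) = 0 := by
        have h := congrFun (congrFun hcomm i) j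
        simp only [Matrix.mul_add, Matrix.add_mul, Matrix.mul_smul, Matrix.smul_mul,
          Matrix.add_apply, Matrix.smul_apply, smul_eq_mul] at h
        simp only [Matrix.sub_apply]
        linear_combination h
      set uu := ((g : Matrix (Fin n) (Fin n) F) * N - N * g) i j with huu
      set vv := ((g : Matrix (Fin n) (Fin n) F) * E - E * g) i j with hvv
      have hu : φ uu = uu := hφfixed N hMN i j
      have hv : φ vv = vv := hφfixed E hME i j
      have hv0 : vv = 0 := by
        by_contra hvne
        apply hθ
        have h2 : θ * vv = -uu := by linear_combination hlin
        have hθeq : θ = -uu * vv⁻¹ := by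
          field_simp
          linear_combination hlin
        rw [hθeq, map_mul, map_neg, map_inv₀, hu, hv]
      refine ⟨?_, hv0⟩
      rw [hv0, mul_zero, add_zero] at hlin
      exact hlin
    constructor
    · ext i j
      have h := (key i j).1
      rw [Matrix.sub_apply, sub_eq_zero] at h
      exact h
    · ext i j
      have h := (key i j).2
      rw [Matrix.sub_apply, sub_eq_zero] at h
      exact h
  obtain ⟨hNc, hEc⟩ := hsplit
  -- entry formulas
  have hgN : ∀ (i j : Fin n), ((g : Matrix (Fin n) (Fin n) F) * N) i j
      = if h : 0 < (j : ℕ) then (g : Matrix (Fin n) (Fin n) F) i ⟨(j : ℕ) - 1, by omega⟩ else 0 := by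
    intro i j
    rw [Matrix.mul_apply]
    split_ifs with h
    · rw [Finset.sum_eq_single (⟨(j : ℕ) - 1, by omega⟩ : Fin n)]
      · rw [hNdef]
        rw [if_pos (by (try simp); omega), mul_one]
      · intro k _ hk
        rw [hNdef]
        rw [if_neg, mul_zero]
        intro hkj
        exact hk (Fin.ext (by (try simp); omega))
      · intro h'; exact absurd (Finset.mem_univ _) h'
    · apply Finset.sum_eq_zero
      intro k _
      rw [hNdef]
      rw [if_neg (by omega), mul_zero]
  have hNg : ∀ (i j : Fin n), (N * (g : Matrix (Fin n) (Fin n) F)) i j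
      = if h : (i : ℕ) + 1 < n then (g : Matrix (Fin n) (Fin n) F) ⟨(i : ℕ) + 1, h⟩ j else 0 := by
    intro i j
    rw [Matrix.mul_apply]
    split_ifs with h
    · rw [Finset.sum_eq_single (⟨(i : ℕ) + 1, h⟩ : Fin n)]
      · rw [hNdef]
        rw [if_pos (by simp), one_mul]
      · intro k _ hk
        rw [hNdef]
        rw [if_neg, zero_mul]
        intro hik
        exact hk (Fin.ext (by (try simp); omega))
      · intro h'; exact absurd (Finset.mem_univ _) h'
    · apply Finset.sum_eq_zero
      intro k _
      rw [hNdef]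
      rw [if_neg (by omega), zero_mul]
  have hgE : ∀ (i j : Fin n), ((g : Matrix (Fin n) (Fin n) F) * E) i j
      = if (j : ℕ) = 0 then (g : Matrix (Fin n) (Fin n) F) i m else 0 := by
    intro i j
    rw [Matrix.mul_apply]
    split_ifs with h
    · rw [Finset.sum_eq_single m]
      · rw [hEdef]
        rw [if_pos ⟨hm, h⟩, mul_one]
      · intro k _ hk
        rw [hEdef]
        rw [if_neg, mul_zero]
        rintro ⟨hk1, -⟩
        exact hk (Fin.ext (by omega))
      · intro h'; exact absurd (Finset.mem_univ _) h'
    · apply Finset.sum_eq_zero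
      intro k _
      rw [hEdef]
      rw [if_neg (by tauto), mul_zero]
  have hEg : ∀ (i j : Fin n), (E * (g : Matrix (Fin n) (Fin n) F)) i j
      = if (i : ℕ) = n - 1 then (g : Matrix (Fin n) (Fin n) F) z j else 0 := by
    intro i j
    rw [Matrix.mul_apply]
    split_ifs with h
    · rw [Finset.sum_eq_single z]
      · rw [hEdef]
        rw [if_pos ⟨h, hz⟩, one_mul]
      · intro k _ hk
        rw [hEdef]
        rw [if_neg, zero_mul]
        rintro ⟨-, hk2⟩
        exact hk (Fin.ext (by omega))
      · intro h'; exact absurd (Finset.mem_univ _) h'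
    · apply Finset.sum_eq_zero
      intro k _
      rw [hEdef]
      rw [if_neg (by tauto), zero_mul]
  -- relations
  have R1 : ∀ (i j : ℕ) (hi : i + 1 < n) (hj : j + 1 < n),
      (g : Matrix (Fin n) (Fin n) F) ⟨i, by omega⟩ ⟨j, by omega⟩
        = (g : Matrix (Fin n) (Fin n) F) ⟨i + 1, hi⟩ ⟨j + 1, hj⟩ := by
    intro i j hi hj
    have h := congrFun (congrFun hNc (⟨i, by omega⟩ : Fin n)) (⟨j + 1, hj⟩ : Fin n)
    rw [hgN, hNg, dif_pos (by simp), dif_pos (by simpa using hi)] at h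
    calc (g : Matrix (Fin n) (Fin n) F) ⟨i, by omega⟩ ⟨j, by omega⟩
        = (g : Matrix (Fin n) (Fin n) F) ⟨i, by omega⟩ ⟨j + 1 - 1, by omega⟩ :=
          gcongr _ _ _ _ rfl (by simp)
      _ = (g : Matrix (Fin n) (Fin n) F) ⟨i + 1, hi⟩ ⟨j + 1, hj⟩ := by
          rw [h]; try exact gcongr _ _ _ _ (by (try simp); try omega) rfl
  have R2 : ∀ (k : Fin n), 0 < (k : ℕ) → (g : Matrix (Fin n) (Fin n) F) k z = 0 := by
    intro k hk
    have h := congrFun (congrFun hNc (⟨(k : ℕ) - 1, by omega⟩ : Fin n)) z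
    rw [hgN, hNg, dif_neg (by omega), dif_pos (by (try simp); omega)] at h
    rw [show (g : Matrix (Fin n) (Fin n) F) k z
        = (g : Matrix (Fin n) (Fin n) F) ⟨(k : ℕ) - 1 + 1, by omega⟩ z from
      gcongr _ _ _ _ (by (try simp); try omega) rfl]
    exact h.symm
  have R3 : ∀ (j : Fin n), 0 < (j : ℕ) → (g : Matrix (Fin n) (Fin n) F) z j = 0 := by
    intro j hj
    have h := congrFun (congrFun hEc m) j
    rw [hgE, hEg, if_neg (by omega), if_pos hm] at h
    exact h.symm
  -- shift lemma
  have hshift : ∀ (t i j : ℕ) (hi : i + t < n) (hj : j + t < n),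
      (g : Matrix (Fin n) (Fin n) F) ⟨i, by omega⟩ ⟨j, by omega⟩
        = (g : Matrix (Fin n) (Fin n) F) ⟨i + t, hi⟩ ⟨j + t, hj⟩ := by
    intro t
    induction t with
    | zero =>
      intro i j hi hj
      exact gcongr _ _ _ _ (by (try simp); try omega) (by (try simp); try omega)
    | succ t ih =>
      intro i j hi hj
      have h1 : i + 1 < n := by omega
      have h2 : j + 1 < n := by omega
      rw [R1 i j h1 h2, ih (i + 1) (j + 1) (by omega) (by omega)]
      exact gcongr _ _ _ _ (by (try simp); try omega) (by (try simp); try omega)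
  -- g is scalar
  obtain ⟨c, hc⟩ : ∃ c : F, c = (g : Matrix (Fin n) (Fin n) F) z z := ⟨_, rfl⟩
  have hscalar : (g : Matrix (Fin n) (Fin n) F) = c • (1 : Matrix (Fin n) (Fin n) F) := by
    ext i j
    rw [Matrix.smul_apply, Matrix.one_apply]
    rcases lt_trichotomy (i : ℕ) (j : ℕ) with hlt | heq | hgt
    · rw [if_neg (fun h => by rw [h] at hlt; omega), smul_zero]
      calc (g : Matrix (Fin n) (Fin n) F) i j
          = (g : Matrix (Fin n) (Fin n) F) ⟨0 + (i : ℕ), by omega⟩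
              ⟨(j : ℕ) - (i : ℕ) + (i : ℕ), by omega⟩ :=
            gcongr _ _ _ _ (by (try simp); try omega) (by (try simp); try omega)
        _ = (g : Matrix (Fin n) (Fin n) F) ⟨0, by omega⟩ ⟨(j : ℕ) - (i : ℕ), by omega⟩ :=
            (hshift (i : ℕ) 0 ((j : ℕ) - (i : ℕ)) (by omega) (by omega)).symm
        _ = (g : Matrix (Fin n) (Fin n) F) z ⟨(j : ℕ) - (i : ℕ), by omega⟩ :=
            gcongr _ _ _ _ (by (try simp); try omega) rfl
        _ = 0 := R3 _ (by (try simp); omega)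
    · have hij : i = j := Fin.ext heq
      subst hij
      rw [if_pos rfl, smul_eq_mul, mul_one]
      calc (g : Matrix (Fin n) (Fin n) F) i i
          = (g : Matrix (Fin n) (Fin n) F) ⟨0 + (i : ℕ), by omega⟩ ⟨0 + (i : ℕ), by omega⟩ :=
            gcongr _ _ _ _ (by (try simp); try omega) (by (try simp); try omega)
        _ = (g : Matrix (Fin n) (Fin n) F) ⟨0, by omega⟩ ⟨0, by omega⟩ :=
            (hshift (i : ℕ) 0 0 (by omega) (by omega)).symm
        _ = c := by rw [hc]; exact gcongr _ _ _ _ (by (try simp); try omega) (by (try simp); try omega)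
    · rw [if_neg (fun h => by rw [h] at hgt; omega), smul_zero]
      calc (g : Matrix (Fin n) (Fin n) F) i j
          = (g : Matrix (Fin n) (Fin n) F) ⟨(i : ℕ) - (j : ℕ) + (j : ℕ), by omega⟩
              ⟨0 + (j : ℕ), by omega⟩ :=
            gcongr _ _ _ _ (by (try simp); try omega) (by (try simp); try omega)
        _ = (g : Matrix (Fin n) (Fin n) F) ⟨(i : ℕ) - (j : ℕ), by omega⟩ ⟨0, by omega⟩ :=
            (hshift (j : ℕ) ((i : ℕ) - (j : ℕ)) 0 (by omega) (by omega)).symm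
        _ = (g : Matrix (Fin n) (Fin n) F) ⟨(i : ℕ) - (j : ℕ), by omega⟩ z :=
            gcongr _ _ _ _ rfl (by (try simp); try omega)
        _ = 0 := R2 _ (by (try simp); omega)
  -- conclude
  rw [hmap]
  have hCg : C * (g : Matrix (Fin n) (Fin n) F) = (g : Matrix (Fin n) (Fin n) F) * C := by
    rw [hscalar, mul_smul_comm, smul_mul_assoc, mul_one, one_mul]
  calc ((g⁻¹ : Matrix.SpecialLinearGroup (Fin n) F) : Matrix (Fin n) (Fin n) F) * C * g
      = ((g⁻¹ : Matrix.SpecialLinearGroup (Fin n) F) : Matrix (Fin n) (Fin n) F) * (C * g) :=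
        Matrix.mul_assoc _ _ _
    _ = ((g⁻¹ : Matrix.SpecialLinearGroup (Fin n) F) : Matrix (Fin n) (Fin n) F) * ((g : Matrix (Fin n) (Fin n) F) * C) := by rw [hCg]
    _ = (((g⁻¹ : Matrix.SpecialLinearGroup (Fin n) F) : Matrix (Fin n) (Fin n) F) * g) * C :=
        (Matrix.mul_assoc _ _ _).symm
    _ = C := by rw [hgg, one_mul]
end

section
/- Let K ⊆ L be finite fields with [L:K] = k, and let n ≥ 2. Consider the action of GL_n(K) on the space Lⁿ of column vectors, where g ∈ GL_n(K) acts by multiplication by the matrix obtained from g by mapping its entries into L. Then the minimal size of a base for this action is ⌈n/k⌉: there exists a set of ⌈n/k⌉ vectors of Lⁿ whose common stabilizer in GL_n(K) is trivial, and every subset of Lⁿ of size less than ⌈n/k⌉ is fixed pointwise by some non-identity element of GL_n(K). -/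
/-!
Fix a `K`-basis `b` of `L`. Taking `b`-coordinates entrywise commutes with the action of a matrix
over `K`, so `g ∈ GL_n(K)` fixes `S ⊆ Lⁿ` pointwise iff it fixes pointwise the `K`-span `W` of the
`|S| k` coordinate vectors in `Kⁿ` of the elements of `S`.

Since `n ≤ k ⌈n/k⌉`, the `⌈n/k⌉ k` coordinate slots can be filled with the standard basis of `Kⁿ`,
so `W = Kⁿ` and only `g = 1` fixes it. If `|S| k < n`, then `W` is a proper subspace; for a
nonzero linear form `f` vanishing on `W` and a nonzero `u ∈ ker f` (which exists as `n ≥ 2`),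
the transvection `x ↦ x + f x • u` is a nontrivial element of `GL_n(K)` fixing `W` pointwise.
-/

open Module Matrix

namespace Module.Basis

variable {K L ι m n : Type*} [CommRing K] [Ring L] [Algebra K L]

theorem coord_comp_map_algebraMap_mulVec [Fintype n] (b : Basis ι K L) (g : Matrix m n K)
    (v : n → L) (t : ι) :
    b.coord t ∘ (g.map (algebraMap K L) *ᵥ v) = g *ᵥ (b.coord t ∘ v) := by
  ext i
  simp [mulVec, dotProduct, ← Algebra.smul_def]

theorem map_algebraMap_mulVec_eq_self_iff [Fintype n] (b : Basis ι K L) (g : Matrix n n K)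
    (v : n → L) :
    g.map (algebraMap K L) *ᵥ v = v ↔ ∀ t, g *ᵥ (b.coord t ∘ v) = b.coord t ∘ v := by
  simp_rw [← b.coord_comp_map_algebraMap_mulVec]
  exact ⟨fun h t => by rw [h], fun h => funext fun i => b.ext_elem fun t => congrFun (h t) i⟩

def coordinateSpan (b : Basis ι K L) (S : Set (n → L)) : Submodule K (n → K) :=
  Submodule.span K (Set.range fun p : S × ι => b.coord p.2 ∘ p.1)

theorem coordinateSpan_mono (b : Basis ι K L) {S T : Set (n → L)} (h : S ⊆ T) :
    b.coordinateSpan S ≤ b.coordinateSpan T :=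
  Submodule.span_mono <| Set.range_subset_iff.2 fun p => ⟨(Set.inclusion h p.1, p.2), rfl⟩

theorem forall_map_algebraMap_mulVec_eq_self_iff [Fintype n] (b : Basis ι K L)
    (g : Matrix n n K) (S : Set (n → L)) :
    (∀ v ∈ S, g.map (algebraMap K L) *ᵥ v = v) ↔
      b.coordinateSpan S ≤ g.mulVecLin.fixedSubmodule := by
  simp only [coordinateSpan, Submodule.span_le, Set.range_subset_iff, SetLike.mem_coe,
    LinearMap.mem_fixedSubmodule_iff, mulVecLin_apply, b.map_algebraMap_mulVec_eq_self_iff,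
    Prod.forall, Subtype.forall]

theorem finrank_coordinateSpan_le [StrongRankCondition K] [Fintype ι] (b : Basis ι K L)
    (S : Finset (n → L)) :
    finrank K (b.coordinateSpan (S : Set (n → L))) ≤ S.card * Fintype.card ι :=
  (finrank_range_le_card (R := K) fun p : ↥(S : Set (n → L)) × ι => b.coord p.2 ∘ p.1.1).trans_eq
    (by simp)

theorem exists_coordinateSpan_range_eq_top [Fintype ι] [Fintype n] [DecidableEq n]
    (b : Basis ι K L) {r : ℕ} (h : Fintype.card n ≤ r * Fintype.card ι) :
    ∃ v : Fin r → n → L, b.coordinateSpan (Set.range v) = ⊤ := by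
  obtain ⟨e⟩ : Nonempty (n ↪ Fin r × ι) :=
    Function.Embedding.nonempty_of_card_le (by simpa using h)
  let v : Fin r → n → L := fun j x => if (e x).1 = j then b (e x).2 else 0
  have hv : ∀ x, b.coord (e x).2 ∘ v (e x).1 = Pi.single x 1 := by
    intro x
    ext y
    by_cases hyx : y = x
    · subst hyx; simp [v]
    · rw [Function.comp_apply, Pi.single_eq_of_ne hyx, coord_apply]
      dsimp only [v]
      split_ifs with h
      · rw [b.repr_self, Finsupp.single_eq_of_ne]
        exact fun h' => e.injective.ne hyx (Prod.ext h h'.symm)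
      · simp
  refine ⟨v, eq_top_iff.2 ?_⟩
  rw [← (Pi.basisFun K n).span_eq, Submodule.span_le, Set.range_subset_iff]
  intro x
  rw [Pi.basisFun_apply, ← hv]
  exact Submodule.subset_span ⟨(⟨v (e x).1, Set.mem_range_self _⟩, (e x).2), rfl⟩

theorem exists_card_eq_coordinateSpan_eq_top [Fintype ι] [Fintype n] [DecidableEq n] [Fintype L]
    (b : Basis ι K L) {r : ℕ} (h : Fintype.card n ≤ r * Fintype.card ι)
    (hr : r ≤ Fintype.card (n → L)) :
    ∃ S : Finset (n → L), S.card = r ∧ b.coordinateSpan (S : Set (n → L)) = ⊤ := by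
  classical
  obtain ⟨v, hv⟩ := b.exists_coordinateSpan_range_eq_top h
  -- `v` may repeat vectors, so pad its image to exactly `r` of them.
  obtain ⟨S, hvS, -, hS⟩ := Finset.exists_subsuperset_card_eq
    (Finset.subset_univ (Finset.univ.image v)) (Finset.card_image_le.trans (by simp)) hr
  refine ⟨S, hS, eq_top_iff.2 (hv ▸ b.coordinateSpan_mono ?_)⟩
  simpa [← Finset.coe_subset] using hvS

end Module.Basis

theorem Matrix.mulVecLin_fixedSubmodule_eq_top_iff {K n : Type*} [CommRing K] [Fintype n]
    [DecidableEq n] {g : Matrix n n K} : g.mulVecLin.fixedSubmodule = ⊤ ↔ g = 1 := by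
  rw [LinearMap.fixedSubmodule_eq_top_iff, ← mulVecLin_one, ← toLin'_apply', ← toLin'_apply',
    toLin'.injective.eq_iff]

theorem LinearEquiv.exists_ne_refl_le_fixedSubmodule {K V : Type*} [Field K] [AddCommGroup V]
    [Module K V] [FiniteDimensional K V] {W : Submodule K V} (hW : W ≠ ⊤)
    (hV : 2 ≤ finrank K V) :
    ∃ e : V ≃ₗ[K] V, e ≠ refl K V ∧ W ≤ LinearMap.fixedSubmodule e := by
  obtain ⟨f, hf0, hfW⟩ := W.exists_dual_map_eq_bot_of_lt_top hW.lt_top inferInstance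
  have hker : LinearMap.ker f ≠ ⊥ := fun h => by
    have := LinearMap.finrank_le_finrank_of_injective (LinearMap.ker_eq_bot.1 h)
    rw [finrank_self] at this
    omega
  obtain ⟨v, hv, hv0⟩ := Submodule.exists_mem_ne_zero_of_ne_bot hker
  obtain ⟨x, hx⟩ : ∃ x, f x ≠ 0 := DFunLike.ne_iff.1 hf0
  refine ⟨transvection (LinearMap.mem_ker.1 hv), fun h => ?_, ?_⟩
  · have := LinearEquiv.congr_fun h x
    simp [LinearMap.transvection.apply, hx, hv0] at this
  · exact (LinearMap.le_ker_iff_map.2 hfW).trans (ker_le_fixedSubmodule_transvection _)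

theorem Matrix.GeneralLinearGroup.exists_ne_one_le_fixedSubmodule {K n : Type*} [Field K]
    [Fintype n] [DecidableEq n] {W : Submodule K (n → K)} (hW : W ≠ ⊤)
    (hn : 2 ≤ Fintype.card n) :
    ∃ g : GL n K, g ≠ 1 ∧ W ≤ (g : Matrix n n K).mulVecLin.fixedSubmodule := by
  obtain ⟨e, he, hWe⟩ := LinearEquiv.exists_ne_refl_le_fixedSubmodule hW (by simpa using hn)
  let g : GL n K := toLin.symm ((LinearMap.GeneralLinearGroup.generalLinearEquiv K _).symm e)
  have hg : (g : Matrix n n K).mulVecLin = e := by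
    refine LinearMap.ext fun w => ?_
    rw [← toLin_apply, MulEquiv.apply_symm_apply]
    rfl
  refine ⟨g, ?_, hg ▸ hWe⟩
  simpa [g, MulEquiv.symm_apply_eq, LinearEquiv.one_eq_refl] using he

theorem stmt15_general {K L : Type*} [Field K] [Field L] [Fintype L] [Algebra K L]
    (k n : ℕ) (hk : Module.finrank K L = k) (hn : 2 ≤ n) :
    (∃ S : Finset (Fin n → L), S.card = n ⌈/⌉ k ∧
      ∀ g : Matrix.GeneralLinearGroup (Fin n) K,
        (∀ v ∈ S, ((g : Matrix (Fin n) (Fin n) K).map (algebraMap K L)).mulVec v = v) →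
        g = 1) ∧
    (∀ S : Finset (Fin n → L), S.card < n ⌈/⌉ k →
      ∃ g : Matrix.GeneralLinearGroup (Fin n) K, g ≠ 1 ∧
        ∀ v ∈ S, ((g : Matrix (Fin n) (Fin n) K).map (algebraMap K L)).mulVec v = v) := by
  have hk0 : 0 < k := hk ▸ Module.finrank_pos
  let b := Module.finBasis K L
  have hcard : Fintype.card (Fin (finrank K L)) = k := by rw [Fintype.card_fin, hk]
  constructor
  · have hm : n ⌈/⌉ k < Fintype.card (Fin n → L) := calc
      n ⌈/⌉ k ≤ n := (ceilDiv_le_iff_le_mul hk0).2 (Nat.le_mul_of_pos_left n hk0)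
      _ < Fintype.card L ^ n := Nat.lt_pow_self Fintype.one_lt_card
      _ = Fintype.card (Fin n → L) := by simp
    obtain ⟨S, hS, hW⟩ := b.exists_card_eq_coordinateSpan_eq_top
      (by simpa [hcard, mul_comm] using le_smul_ceilDiv (b := n) hk0) hm.le
    refine ⟨S, hS, fun g hg => ?_⟩
    rw [← Units.val_eq_one, ← mulVecLin_fixedSubmodule_eq_top_iff, eq_top_iff, ← hW]
    exact (b.forall_map_algebraMap_mulVec_eq_self_iff _ _).1 hg
  · intro S hS
    have hW : b.coordinateSpan (S : Set (Fin n → L)) ≠ ⊤ := fun h => by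
      have := b.finrank_coordinateSpan_le S
      rw [h, finrank_top, hcard, finrank_fin_fun] at this
      rw [← not_le, ceilDiv_le_iff_le_mul hk0] at hS
      exact hS (by linarith)
    obtain ⟨g, hg1, hg⟩ := GeneralLinearGroup.exists_ne_one_le_fixedSubmodule hW (by simpa using hn)
    exact ⟨g, hg1, (b.forall_map_algebraMap_mulVec_eq_self_iff _ _).2 hg⟩

/-- Let `K ⊆ L` be finite fields with `[L:K] = k` and `n ≥ 2`, with `GL_n(K)` acting on `Lⁿ`
via the entrywise inclusion of matrices followed by matrix–vector multiplication. Then the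
minimal base size of this action is `⌈n/k⌉`: there is a base of size `⌈n/k⌉`, and any subset
of `Lⁿ` of smaller size is fixed pointwise by a non-identity element of `GL_n(K)`. -/
theorem stmt15 {K L : Type*} [Field K] [Fintype K] [Field L] [Fintype L] [Algebra K L]
    (k n : ℕ) (hk : Module.finrank K L = k) (hn : 2 ≤ n) :
    (∃ S : Finset (Fin n → L), S.card = n ⌈/⌉ k ∧
      ∀ g : Matrix.GeneralLinearGroup (Fin n) K,
        (∀ v ∈ S, ((g : Matrix (Fin n) (Fin n) K).map (algebraMap K L)).mulVec v = v) →
        g = 1) ∧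
    (∀ S : Finset (Fin n → L), S.card < n ⌈/⌉ k →
      ∃ g : Matrix.GeneralLinearGroup (Fin n) K, g ≠ 1 ∧
        ∀ v ∈ S, ((g : Matrix (Fin n) (Fin n) K).map (algebraMap K L)).mulVec v = v) :=
  stmt15_general k n hk hn
end
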